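/- If a function class Γ of bounded measurable functions satisfies S_Σ[Γ] ⊆ Γ, then for any two probability measures ν, μ on X, the IPM satisfies d_Γ(S^Σ[ν], S^Σ[μ]) = d_{Γ_Σ}(ν, μ), where Γ_Σ is the subclass of Σ-invariant functions in Γ. In particular, if ν and μ are both Σ-invariant, then d_Γ(ν, μ) = d_{Γ_Σ}(ν, μ). -/

import Mathlib

open MeasureTheory

/-- Symmetrization operator on functions. -/
noncomputable def symmFun (G : Type*) [Group G] [Fintype G] {X : Type*} [MulAction G X]
    (γ : X → ℝ) : X → ℝ :=
  fun x => (∑ σ : G, γ (σ • x)) / (Fintype.card G : ℝ)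

/-- Symmetrization operator on measures. -/
noncomputable def symmMeas (G : Type*) [Group G] [Fintype G] {X : Type*} [MeasurableSpace X]
    [MulAction G X] (μ : Measure X) : Measure X :=
  (Fintype.card G : ENNReal)⁻¹ • ∑ σ : G, Measure.map (fun x : X => σ • x) μ

/-- Integral probability metric `d_Γ(ν, μ) = sup_{γ∈Γ} (E_ν[γ] − E_μ[γ])`. -/
noncomputable def ipm {X : Type*} [MeasurableSpace X] (Γ : Set (X → ℝ))
    (ν μ : Measure X) : ℝ :=
  ⨆ γ : Γ, (∫ x, γ.1 x ∂ν - ∫ x, γ.1 x ∂μ)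

/-! Averaging over `Σ` can be moved from the measures to the test functions:
`∫ γ d(S^Σ ρ) = ∫ S_Σ γ dρ`. Since `S_Σ γ` is invariant and `S_Σ` fixes invariant functions,
`S_Σ` maps `Γ` onto `Γ_Σ`, so both suprema run over the same set of values. For invariant `ν` and
`μ` one has `S^Σ ν = ν` and `S^Σ μ = μ`. -/

section Symmetrization

variable {G : Type*} [Group G] [Fintype G] {X : Type*} [MulAction G X]

theorem symmFun_smul (γ : X → ℝ) (τ : G) (x : X) : symmFun G γ (τ • x) = symmFun G γ x := by
  simp only [symmFun, ← mul_smul]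
  exact congrArg (· / _) (Equiv.sum_comp (Equiv.mulRight τ) fun σ => γ (σ • x))

theorem symmFun_eq_self {γ : X → ℝ} (h : ∀ (σ : G) (x : X), γ (σ • x) = γ x) :
    symmFun G γ = γ := by
  funext x
  simp [symmFun, h]

variable [MeasurableSpace X]

theorem symmMeas_eq_self {μ : Measure X} (h : ∀ σ : G, Measure.map (fun x : X => σ • x) μ = μ) :
    symmMeas G μ = μ := by
  simp [symmMeas, h, ← Nat.cast_smul_eq_nsmul ENNReal, smul_smul,
    ENNReal.inv_mul_cancel (Nat.cast_ne_zero.2 Fintype.card_ne_zero) (ENNReal.natCast_ne_top _)]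

theorem integral_symmMeas (hmeas : ∀ σ : G, Measurable (fun x : X => σ • x))
    {μ : Measure X} {γ : X → ℝ} (hγ : Measurable γ)
    (hint : ∀ σ : G, Integrable (fun x => γ (σ • x)) μ) :
    ∫ x, γ x ∂(symmMeas G μ) = ∫ x, symmFun G γ x ∂μ := by
  have hint_map (σ : G) : Integrable γ (Measure.map (fun x : X => σ • x) μ) :=
    (integrable_map_measure hγ.aestronglyMeasurable (hmeas σ).aemeasurable).2 (hint σ)
  unfold symmMeas symmFun
  rw [integral_smul_measure, integral_finsetSum_measure fun σ _ => hint_map σ, integral_div,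
    integral_finsetSum _ fun σ _ => hint σ]
  simp [integral_map (hmeas _).aemeasurable hγ.aestronglyMeasurable, div_eq_inv_mul]

theorem ipm_symmMeas_eq_ipm_invariant
    (hmeas : ∀ σ : G, Measurable (fun x : X => σ • x)) {Γ : Set (X → ℝ)}
    (hΓmeas : ∀ γ ∈ Γ, Measurable γ) (hΓbdd : ∀ γ ∈ Γ, ∃ M : ℝ, ∀ x, |γ x| ≤ M)
    (hSΓ : ∀ γ ∈ Γ, symmFun G γ ∈ Γ) (ν μ : Measure X) [IsFiniteMeasure ν] [IsFiniteMeasure μ] :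
    ipm Γ (symmMeas G ν) (symmMeas G μ) = ipm {γ ∈ Γ | ∀ (σ : G) (x : X), γ (σ • x) = γ x} ν μ := by
  have integral_symmMeas_of_mem {ρ : Measure X} [IsFiniteMeasure ρ] {γ : X → ℝ} (hγ : γ ∈ Γ) :
      ∫ x, γ x ∂(symmMeas G ρ) = ∫ x, symmFun G γ x ∂ρ := by
    obtain ⟨M, hM⟩ := hΓbdd γ hγ
    exact integral_symmMeas hmeas (hΓmeas γ hγ) fun σ =>
      .of_bound ((hΓmeas γ hγ).comp (hmeas σ)).aestronglyMeasurable M (.of_forall fun x => hM _)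
  refine Function.Surjective.iSup_congr
    (fun γ => ⟨symmFun G γ, hSΓ γ γ.2, symmFun_smul γ.1⟩) ?_ fun ⟨γ, hγ⟩ => ?_
  · rintro ⟨γ, hγ, hinv⟩
    exact ⟨⟨γ, hγ⟩, Subtype.ext (symmFun_eq_self hinv)⟩
  · rw [integral_symmMeas_of_mem hγ, integral_symmMeas_of_mem hγ]

end Symmetrization

/-- If `S_Σ[Γ] ⊆ Γ`, then `d_Γ(S^Σ[ν], S^Σ[μ]) = d_{Γ_Σ}(ν, μ)`; in particular, if `ν`
and `μ` are `Σ`-invariant, then `d_Γ(ν, μ) = d_{Γ_Σ}(ν, μ)`. -/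
theorem ipm_symm_eq_invariant_ipm {X : Type*} [MeasurableSpace X]
    (G : Type*) [Group G] [Fintype G] [MulAction G X]
    (hmeas : ∀ σ : G, Measurable (fun x : X => σ • x))
    (Γ : Set (X → ℝ))
    (hΓmeas : ∀ γ ∈ Γ, Measurable γ) (hΓbdd : ∀ γ ∈ Γ, ∃ M : ℝ, ∀ x, |γ x| ≤ M)
    (hSΓ : ∀ γ ∈ Γ, symmFun G γ ∈ Γ)
    (ν μ : Measure X) [IsProbabilityMeasure ν] [IsProbabilityMeasure μ] :
    (ipm Γ (symmMeas G ν) (symmMeas G μ)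
        = ipm {γ ∈ Γ | ∀ (σ : G) (x : X), γ (σ • x) = γ x} ν μ) ∧
    ((∀ σ : G, Measure.map (fun x : X => σ • x) ν = ν) →
      (∀ σ : G, Measure.map (fun x : X => σ • x) μ = μ) →
      ipm Γ ν μ = ipm {γ ∈ Γ | ∀ (σ : G) (x : X), γ (σ • x) = γ x} ν μ) := by
  have h := ipm_symmMeas_eq_ipm_invariant hmeas hΓmeas hΓbdd hSΓ ν μ
  exact ⟨h, fun hν hμ => by rwa [symmMeas_eq_self hν, symmMeas_eq_self hμ] at h⟩
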